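/- arXiv:math/0108002 — 4 statements merged into one kernel-verified Lean document; each statement's English description precedes it below -/
import Mathlib

section
/- Let V be a real vector space of dimension 2n and Ω a complex n-form on V ⊗ ℂ such that Ker Ω := {v ∈ V⊗ℂ : ι_v Ω = 0} has complex dimension n and Ker Ω ∩ conj(Ker Ω) = {0}. Then V⊗ℂ decomposes as the direct sum Ker Ω ⊕ conj(Ker Ω), and the map I_Ω defined by I_Ω v = i·v on Ker Ω and I_Ω v = −i·v on conj(Ker Ω) restricts to a real linear endomorphism of V with I_Ω² = −id, i.e. an almost complex structure on V. -/
/-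
STATEMENT 0: Let V be a real vector space of dimension 2n and Ω a complex
n-form on W = V⊗ℂ such that Ker Ω = {v : ι_v Ω = 0} has complex dimension n
and Ker Ω ∩ conj(Ker Ω) = {0}.  Then W = Ker Ω ⊕ conj(Ker Ω), and the map I_Ω
(multiplication by i on Ker Ω and by −i on conj(Ker Ω)) commutes with conj,
hence restricts to a real linear endomorphism of V = Fix(conj), and satisfies
I_Ω² = −id: an almost complex structure on V.
We model W = V⊗ℂ as a complex vector space with a conjugation `conj` (the
conjugate-linear involution fixing V, so dim_ℝ V = 2n ↔ dim_ℂ W = 2n), and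
ι_v Ω = 0 as: Ω vanishes whenever one of its arguments is v.
-/

variable {n : ℕ} {W : Type*} [AddCommGroup W] [Module ℝ W] [Module ℂ W]
  [IsScalarTower ℝ ℂ W]

/-- `Ker Ω = {v ∈ W : ι_v Ω = 0}` as a complex subspace. -/
def kerForm (Ω : AlternatingMap ℂ W ℂ (Fin n)) : Submodule ℂ W where
  carrier := {v | ∀ x : Fin n → W, (∃ i, x i = v) → Ω x = 0}
  add_mem' := by
    intro a b ha hb x hx
    obtain ⟨i, hi⟩ := hx
    have hx' : x = Function.update x i (a + b) := by
      rw [← hi, Function.update_eq_self]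
    rw [hx', Ω.map_update_add]
    rw [ha (Function.update x i a) ⟨i, Function.update_self i a x⟩,
        hb (Function.update x i b) ⟨i, Function.update_self i b x⟩, add_zero]
  zero_mem' := by
    intro x hx
    obtain ⟨i, hi⟩ := hx
    have hx' : x = Function.update x i (0 : W) := by
      rw [← hi, Function.update_eq_self]
    rw [hx']
    exact Ω.map_update_zero x i
  smul_mem' := by
    intro c v hv x hx
    obtain ⟨i, hi⟩ := hx
    have hx' : x = Function.update x i (c • v) := by
      rw [← hi, Function.update_eq_self]
    rw [hx', Ω.map_update_smul,
        hv (Function.update x i v) ⟨i, Function.update_self i v x⟩, smul_zero]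

/-- The conjugate subspace `conj(Ker Ω)`. -/
def conjKerForm (Ω : AlternatingMap ℂ W ℂ (Fin n)) (conj : W →ₗ[ℝ] W)
    (hconjsmul : ∀ (c : ℂ) (w : W), conj (c • w) = (starRingEnd ℂ c) • conj w) :
    Submodule ℂ W where
  carrier := conj '' (kerForm Ω)
  add_mem' := by
    rintro _ _ ⟨a, ha, rfl⟩ ⟨b, hb, rfl⟩
    exact ⟨a + b, Submodule.add_mem _ ha hb, map_add conj a b⟩
  zero_mem' := ⟨0, Submodule.zero_mem _, map_zero conj⟩
  smul_mem' := by
    rintro c _ ⟨a, ha, rfl⟩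
    refine ⟨(starRingEnd ℂ c) • a, Submodule.smul_mem _ _ ha, ?_⟩
    rw [hconjsmul, Complex.conj_conj]

theorem stmt_0 [FiniteDimensional ℂ W]
    (conj : W →ₗ[ℝ] W)
    (hconjsmul : ∀ (c : ℂ) (w : W), conj (c • w) = (starRingEnd ℂ c) • conj w)
    (hconj2 : ∀ w : W, conj (conj w) = w)
    (Ω : AlternatingMap ℂ W ℂ (Fin n))
    (hdimW : Module.finrank ℂ W = 2 * n)
    (hdimK : Module.finrank ℂ ↥(kerForm Ω) = n)
    (hdisj : kerForm Ω ⊓ conjKerForm Ω conj hconjsmul = ⊥) :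
    IsCompl (kerForm Ω) (conjKerForm Ω conj hconjsmul) ∧
    ∃ J : W →ₗ[ℂ] W,
      (∀ v ∈ kerForm Ω, J v = Complex.I • v) ∧
      (∀ v ∈ conjKerForm Ω conj hconjsmul, J v = -(Complex.I • v)) ∧
      (∀ w : W, conj (J w) = J (conj w)) ∧
      (∀ v : W, conj v = v → conj (J v) = J v) ∧
      (∀ w : W, J (J w) = -w) := by

  classical
  set K := kerForm Ω with hKdef
  set K' := conjKerForm Ω conj hconjsmul with hK'def
  have hconj_inj : Function.Injective conj := fun a b h => by
    have := congrArg conj h; rwa [hconj2, hconj2] at this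
  have hmemK' : ∀ v ∈ K, conj v ∈ K' := fun v hv => ⟨v, hv, rfl⟩
  have hmemK : ∀ v ∈ K', conj v ∈ K := by
    rintro _ ⟨a, ha, rfl⟩; rwa [hconj2]
  -- real-linear equivalence K ≃ K'
  have e : K ≃ₗ[ℝ] K' :=
    { toFun := fun x => ⟨conj x, hmemK' x x.2⟩
      invFun := fun y => ⟨conj y, hmemK y y.2⟩
      map_add' := fun a b => Subtype.ext (by simp)
      map_smul' := fun c x => Subtype.ext (by simp)
      left_inv := fun x => Subtype.ext (hconj2 x)
      right_inv := fun y => Subtype.ext (hconj2 y) }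
  have hrKK' : Module.finrank ℝ K = Module.finrank ℝ K' := e.finrank_eq
  have hmulK : Module.finrank ℝ ℂ * Module.finrank ℂ K = Module.finrank ℝ K :=
    Module.finrank_mul_finrank ℝ ℂ K
  have hmulK' : Module.finrank ℝ ℂ * Module.finrank ℂ K' = Module.finrank ℝ K' :=
    Module.finrank_mul_finrank ℝ ℂ K'
  rw [Complex.finrank_real_complex] at hmulK hmulK'
  have hdimK' : Module.finrank ℂ K' = n := by omega
  have hdisj' : Disjoint K K' := disjoint_iff.mpr hdisj
  have htop : K ⊔ K' = ⊤ :=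
    Submodule.eq_top_of_disjoint K K' (by rw [hdimK, hdimK', hdimW]; omega) hdisj'
  have hcompl : IsCompl K K' := ⟨hdisj', codisjoint_iff.mpr htop⟩
  refine ⟨hcompl, ?_⟩
  set π1 := K.projectionOnto K' hcompl with hπ1
  set π2 := K'.projectionOnto K hcompl.symm with hπ2
  set J : W →ₗ[ℂ] W :=
    Complex.I • (K.subtype ∘ₗ π1) - Complex.I • (K'.subtype ∘ₗ π2) with hJdef
  have hJapp : ∀ w : W, J w = Complex.I • (π1 w : W) - Complex.I • (π2 w : W) := by
    intro w; simp [hJdef]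
  have hJK : ∀ v ∈ K, J v = Complex.I • v := by
    intro v hv
    have h1 : π1 v = ⟨v, hv⟩ := Submodule.projectionOnto_apply_left hcompl ⟨v, hv⟩
    have h2 : π2 v = 0 := Submodule.projectionOnto_apply_of_mem_right hcompl.symm hv
    rw [hJapp, h1, h2]; simp
  have hJK' : ∀ v ∈ K', J v = -(Complex.I • v) := by
    intro v hv
    have h1 : π1 v = 0 := Submodule.projectionOnto_apply_of_mem_right hcompl hv
    have h2 : π2 v = ⟨v, hv⟩ := Submodule.projectionOnto_apply_left hcompl.symm ⟨v, hv⟩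
    rw [hJapp, h1, h2]; simp
  have hdecomp : ∀ w : W, (π1 w : W) + (π2 w : W) = w := fun w =>
    Submodule.projection_add_projection_eq_self hcompl w
  have hcomm : ∀ w : W, conj (J w) = J (conj w) := by
    intro w
    set a : W := (π1 w : W) with ha
    set b : W := (π2 w : W) with hb
    have haK : a ∈ K := (π1 w).2
    have hbK : b ∈ K' := (π2 w).2
    have hL : conj (J w) = (-Complex.I) • conj a + Complex.I • conj b := by
      rw [hJapp, map_sub, hconjsmul, hconjsmul, Complex.conj_I]
      rw [neg_smul, neg_smul, sub_neg_eq_add]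
    have hR : J (conj w) = -(Complex.I • conj a) + Complex.I • conj b := by
      rw [← hdecomp w, map_add, map_add, hJK' _ (hmemK' a haK), hJK _ (hmemK b hbK)]
    simp [hL, hR, neg_smul]
  refine ⟨J, hJK, hJK', hcomm, fun v hv => by rw [hcomm, hv], ?_⟩
  intro w
  set a : W := (π1 w : W) with ha
  set b : W := (π2 w : W) with hb
  have haK : a ∈ K := (π1 w).2
  have hbK : b ∈ K' := (π2 w).2
  have h1 : J (J w) = Complex.I • J a - Complex.I • J b := by
    rw [hJapp w, map_sub, map_smul, map_smul]
  rw [h1, hJK a haK, hJK' b hbK, smul_neg, sub_neg_eq_add, smul_smul, smul_smul,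
    Complex.I_mul_I, neg_one_smul, neg_one_smul, ← neg_add, hdecomp w]
end

section
/- Let V be a real vector space of dimension 2n with a Calabi-Yau structure Ω⁰ (so Ker Ω⁰ has complex dimension n and Ker Ω⁰ ∩ conj(Ker Ω⁰) = 0). The isotropy group H = {g ∈ GL(V) : ρ_g Ω⁰ = Ω⁰} of the induced GL(V)-action on complex n-forms is isomorphic to SL(n, ℂ), regarded as the subgroup of GL(V) of real-linear maps commuting with the induced complex structure I_{Ω⁰} and of complex determinant 1. -/
/-
STATEMENT 1: Let V be a real vector space of dimension 2n with a Calabi-Yau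
structure Ω⁰ (a nonzero complex n-form of type (n,0) with respect to the
induced complex structure I = I_{Ω⁰}).  The isotropy group
H = {g ∈ GL(V) : ρ_g Ω⁰ = Ω⁰} of the GL(V)-action on complex n-forms is
isomorphic to SL(n, ℂ).
We model Ω⁰ as a complex-valued real-alternating n-form on V; the Calabi-Yau
condition is packaged by the complex structure I (with I² = −1) for which Ω⁰
is of type (n,0) and Ω⁰ ≠ 0.  Since the set {g : ρ_g Ω⁰ = Ω⁰} coincides with
{g : Ω⁰ ∘ g = Ω⁰}, we use the latter as the stabilizer.
-/

variable {n : ℕ} {V : Type*} [AddCommGroup V] [Module ℝ V]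

/-- The isotropy group `{g ∈ GL(V) : Ω ∘ g = Ω}` of an n-form. -/
def formStabilizer (Ω : AlternatingMap ℝ V ℂ (Fin n)) : Subgroup (V ≃ₗ[ℝ] V) where
  carrier := {g | ∀ x : Fin n → V, Ω (fun i => g (x i)) = Ω x}
  one_mem' := by intro x; rfl
  mul_mem' := by
    intro a b ha hb x
    exact (ha fun i => b (x i)).trans (hb x)
  inv_mem' := by
    intro a ha x
    have h := ha fun i => a.symm (x i)
    simp only [LinearEquiv.apply_symm_apply] at h
    exact h.symm

/-!
The complex structure `I` makes `V` an `n`-dimensional complex vector space, and the type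
condition says exactly that `Ω` is complex multilinear, so `Ω` is a nonzero multiple of the
complex determinant. A real automorphism `g` fixing `Ω` must commute with `I`: the vector
`I (g v) - g (I v)` is annihilated by `Ω` in every slot, and a nonzero top-degree form has no
such vectors except `0`. Hence the stabilizer consists of the complex automorphisms `g` with
`Ω ∘ g = det g • Ω = Ω`, i.e. `det g = 1`, and choosing a complex basis identifies it with
`SL(n, ℂ)`.
-/

open Module

theorem exists_complexModule_of_sq_eq_neg_one (I : V →ₗ[ℝ] V) (hI : ∀ v : V, I (I v) = -v) :
    ∃ _ : Module ℂ V, IsScalarTower ℝ ℂ V ∧ ∀ v : V, Complex.I • v = I v := by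
  let φ : ℂ →ₐ[ℝ] End ℝ V := Complex.liftAux I (LinearMap.ext hI)
  let complexModule : Module ℂ V := Module.compHom V φ.toRingHom
  refine ⟨complexModule, ⟨fun r z v => ?_⟩, fun v => ?_⟩
  · show φ (r • z) v = r • φ z v
    rw [map_smul]; rfl
  · show φ Complex.I v = I v
    rw [Complex.liftAux_apply_I]

section ComplexLinear

variable {W : Type*} [AddCommGroup W] [Module ℝ W] [Module ℂ V] [IsScalarTower ℝ ℂ V]
  [Module ℂ W] [IsScalarTower ℝ ℂ W]

theorem complex_smul_eq_re_smul_add_im_smul_I_smul (z : ℂ) (v : V) :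
    z • v = z.re • v + z.im • Complex.I • v := by
  conv_lhs => rw [← Complex.re_add_im z]
  rw [add_smul, mul_smul, ← Complex.coe_algebraMap, algebraMap_smul, algebraMap_smul]

def LinearEquiv.complexOfMapISmul (g : V ≃ₗ[ℝ] W) (h : ∀ v, g (Complex.I • v) = Complex.I • g v) :
    V ≃ₗ[ℂ] W where
  __ := g
  map_smul' z v := by
    simp only [complex_smul_eq_re_smul_add_im_smul_I_smul z, map_add, map_smul, h,
      AddHom.toFun_eq_coe, LinearMap.coe_toAddHom, LinearEquiv.coe_coe, RingHom.id_apply]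

def AlternatingMap.IsComplexMultilinear {ι : Type*} [DecidableEq ι] (Ω : V [⋀^ι]→ₗ[ℝ] W) :
    Prop :=
  ∀ (x : ι → V) (j : ι) (v : V),
    Ω (Function.update x j (Complex.I • v)) = Complex.I • Ω (Function.update x j v)

def AlternatingMap.IsComplexMultilinear.toComplex {ι : Type*} [hι : DecidableEq ι]
    {Ω : V [⋀^ι]→ₗ[ℝ] W} (h : Ω.IsComplexMultilinear) : V [⋀^ι]→ₗ[ℂ] W where
  toFun := Ω
  map_update_add' := Ω.map_update_add'
  map_update_smul' x j z v := by
    -- `map_update_smul'` is stated for an arbitrary `DecidableEq ι` instance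
    rename_i inst
    rw [Subsingleton.elim inst hι, complex_smul_eq_re_smul_add_im_smul_I_smul z,
      Ω.map_update_add, Ω.map_update_smul, Ω.map_update_smul, h,
      complex_smul_eq_re_smul_add_im_smul_I_smul z]
  map_eq_zero_of_eq' := Ω.map_eq_zero_of_eq'

theorem AlternatingMap.IsComplexMultilinear.toComplex_ne_zero {ι : Type*} [DecidableEq ι]
    {Ω : V [⋀^ι]→ₗ[ℝ] W} (h : Ω.IsComplexMultilinear) (hΩ : Ω ≠ 0) : h.toComplex ≠ 0 :=
  fun h0 => hΩ (AlternatingMap.ext fun x => congrArg (· x) h0)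

end ComplexLinear

theorem AlternatingMap.map_update_basis {R M ι : Type*} [CommRing R] [AddCommGroup M] [Module R M]
    [DecidableEq ι] (f : M [⋀^ι]→ₗ[R] R) (b : Basis ι R M) (i : ι) (w : M) :
    f (Function.update b i w) = b.repr w i * f b := by
  have hlin : f.toMultilinearMap.toLinearMap b i = f b • b.coord i := by
    refine b.ext fun k => ?_
    rcases eq_or_ne k i with rfl | hki
    · simp
    · simp only [MultilinearMap.toLinearMap_apply, LinearMap.smul_apply, Basis.coord_apply,
        Basis.repr_self]
      rw [Finsupp.single_eq_of_ne hki.symm, smul_zero]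
      exact f.map_eq_zero_of_eq _ (by simp [hki]) hki
  simpa [mul_comm] using congrArg (· w) hlin

section TopDegree

variable {K M ι : Type*} [Field K] [AddCommGroup M] [Module K M] [FiniteDimensional K M]
  [Fintype ι] [DecidableEq ι]

theorem AlternatingMap.eq_zero_of_forall_map_update_eq_zero (hι : finrank K M = Fintype.card ι)
    {f : M [⋀^ι]→ₗ[K] K} (hf : f ≠ 0) {w : M}
    (hw : ∀ (x : ι → M) (i : ι), f (Function.update x i w) = 0) : w = 0 := by
  let b := (Module.finBasisOfFinrankEq K M hι).reindex (Fintype.equivFin ι).symm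
  have hb : f b ≠ 0 := (f.map_basis_ne_zero_iff b).mpr hf
  refine b.repr.injective (Finsupp.ext fun i => ?_)
  simpa [f.map_update_basis, hb] using hw b i

theorem AlternatingMap.compLinearMap_eq_det_smul (hι : finrank K M = Fintype.card ι)
    (f : M [⋀^ι]→ₗ[K] K) (g : M →ₗ[K] M) : f.compLinearMap g = LinearMap.det g • f := by
  let b := (Module.finBasisOfFinrankEq K M hι).reindex (Fintype.equivFin ι).symm
  ext x
  rw [f.eq_smul_basis_det b]
  simp only [AlternatingMap.compLinearMap_apply, AlternatingMap.smul_apply, smul_eq_mul]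
  rw [← Function.comp_def g, b.det_comp]
  ring

theorem AlternatingMap.compLinearMap_eq_self_iff (hι : finrank K M = Fintype.card ι)
    {f : M [⋀^ι]→ₗ[K] K} (hf : f ≠ 0) (g : M →ₗ[K] M) :
    f.compLinearMap g = f ↔ LinearMap.det g = 1 := by
  obtain ⟨x, hx⟩ : ∃ x, f x ≠ 0 := by
    by_contra! h
    exact hf (AlternatingMap.ext h)
  rw [f.compLinearMap_eq_det_smul hι]
  refine ⟨fun h => ?_, fun h => by rw [h, one_smul]⟩
  simpa [hx] using congrArg (· x) h

end TopDegree

section RestrictScalars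

variable (R : Type*) {S M : Type*} [Semiring R] [CommRing S] [AddCommGroup M] [Module R M]
  [Module S M] [LinearMap.CompatibleSMul M M R S]

def SpecialLinearGroup.restrictScalars : SpecialLinearGroup S M →* (M ≃ₗ[R] M) where
  toFun u := (u : M ≃ₗ[S] M).restrictScalars R
  map_one' := rfl
  map_mul' _ _ := rfl

theorem SpecialLinearGroup.restrictScalars_injective :
    Function.Injective (SpecialLinearGroup.restrictScalars R : SpecialLinearGroup S M →* _) :=
  fun _ _ h => Subtype.ext (LinearEquiv.restrictScalars_injective R h)

end RestrictScalars

section Stabilizer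

variable [Module ℂ V] [IsScalarTower ℝ ℂ V]

theorem map_I_smul_of_mem_formStabilizer [FiniteDimensional ℂ V] (hrank : finrank ℂ V = n)
    {Ω : V [⋀^Fin n]→ₗ[ℝ] ℂ} (hΩ : Ω ≠ 0) (htype : Ω.IsComplexMultilinear)
    {g : V ≃ₗ[ℝ] V} (hg : g ∈ formStabilizer Ω) (v : V) :
    g (Complex.I • v) = Complex.I • g v := by
  have hg' : ∀ y : Fin n → V, Ω (g ∘ y) = Ω y := hg
  have hupdate : ∀ (y : Fin n → V) (j : Fin n) (u : V),
      Ω (Function.update (g ∘ y) j (g u)) = Ω (Function.update y j u) := by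
    intro y j u
    rw [← Function.comp_update, hg']
  refine (sub_eq_zero.mp (htype.toComplex.eq_zero_of_forall_map_update_eq_zero
    (by simpa using hrank) (htype.toComplex_ne_zero hΩ) fun x j => ?_)).symm
  obtain ⟨y, rfl⟩ : ∃ y, x = g ∘ y := ⟨g.symm ∘ x, by ext; simp⟩
  show Ω _ = 0
  rw [Ω.map_update_sub, htype, hupdate, hupdate, htype, sub_self]

theorem SpecialLinearGroup.range_restrictScalars_eq_formStabilizer [FiniteDimensional ℂ V]
    (hrank : finrank ℂ V = n) {Ω : V [⋀^Fin n]→ₗ[ℝ] ℂ} (hΩ : Ω ≠ 0)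
    (htype : Ω.IsComplexMultilinear) :
    (SpecialLinearGroup.restrictScalars ℝ : SpecialLinearGroup ℂ V →* _).range =
      formStabilizer Ω := by
  have hmem : ∀ e : V ≃ₗ[ℂ] V,
      e.restrictScalars ℝ ∈ formStabilizer Ω ↔ LinearMap.det (e : V →ₗ[ℂ] V) = 1 := by
    intro e
    rw [← htype.toComplex.compLinearMap_eq_self_iff (by simpa using hrank)
      (htype.toComplex_ne_zero hΩ), AlternatingMap.ext_iff]
    rfl
  ext g
  constructor
  · rintro ⟨u, rfl⟩
    exact (hmem u).mpr u.det_eq_one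
  · intro hg
    let e := g.complexOfMapISmul (map_I_smul_of_mem_formStabilizer hrank hΩ htype hg)
    exact ⟨⟨e, Units.ext ((LinearEquiv.coe_det e).trans ((hmem e).mp hg))⟩, rfl⟩

noncomputable def formStabilizerEquivSpecialLinearGroup [FiniteDimensional ℂ V]
    (hrank : finrank ℂ V = n) {Ω : V [⋀^Fin n]→ₗ[ℝ] ℂ} (hΩ : Ω ≠ 0)
    (htype : Ω.IsComplexMultilinear) :
    formStabilizer Ω ≃* SpecialLinearGroup ℂ V :=
  ((MonoidHom.ofInjective (SpecialLinearGroup.restrictScalars_injective ℝ)).trans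
    (MulEquiv.subgroupCongr
      (SpecialLinearGroup.range_restrictScalars_eq_formStabilizer hrank hΩ htype))).symm

end Stabilizer

theorem stmt_1_general [FiniteDimensional ℝ V]
    (hdim : Module.finrank ℝ V = 2 * n)
    (Ω : AlternatingMap ℝ V ℂ (Fin n)) (hΩ : Ω ≠ 0)
    (I : V →ₗ[ℝ] V) (hI : ∀ v : V, I (I v) = -v)
    -- Ω is of type (n,0) with respect to I (so Ker Ω⊗ℂ is the +i eigenspace
    -- of I, i.e. I = I_Ω):
    (htype : ∀ (x : Fin n → V) (j : Fin n),
      Ω (Function.update x j (I (x j))) = Complex.I * Ω x) :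
    Nonempty (formStabilizer Ω ≃* Matrix.SpecialLinearGroup (Fin n) ℂ) := by
  obtain ⟨_, _, hIsmul⟩ := exists_complexModule_of_sq_eq_neg_one I hI
  have : FiniteDimensional ℂ V := .right ℝ ℂ V
  have hrank : finrank ℂ V = n := by
    have := finrank_mul_finrank ℝ ℂ V
    rw [Complex.finrank_real_complex, hdim] at this
    omega
  have htype' : Ω.IsComplexMultilinear := by
    intro x j v
    simpa [hIsmul] using htype (Function.update x j v) j
  exact ⟨(formStabilizerEquivSpecialLinearGroup hrank hΩ htype').trans
    (Matrix.SpecialLinearGroup.toLin_equiv (finBasisOfFinrankEq ℂ V hrank)).symm⟩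

theorem stmt_1 [FiniteDimensional ℝ V]
    (hn : 0 < n)
    (hdim : Module.finrank ℝ V = 2 * n)
    (Ω : AlternatingMap ℝ V ℂ (Fin n)) (hΩ : Ω ≠ 0)
    (I : V →ₗ[ℝ] V) (hI : ∀ v : V, I (I v) = -v)
    -- Ω is of type (n,0) with respect to I (so Ker Ω⊗ℂ is the +i eigenspace
    -- of I, i.e. I = I_Ω):
    (htype : ∀ (x : Fin n → V) (j : Fin n),
      Ω (Function.update x j (I (x j))) = Complex.I * Ω x) :
    Nonempty (formStabilizer Ω ≃* Matrix.SpecialLinearGroup (Fin n) ℂ) :=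
  stmt_1_general hdim Ω hΩ I hI htype
end

section
/- Let V be a 2n-dimensional real vector space with Kähler-Einstein structure (Ω, ω): Ω a Calabi-Yau structure, ω a symplectic form of type (1,1), Ω ∧ ω = 0, Ω ∧ conj(Ω) = c_n ωⁿ, and g(u,v) = ω(I_Ω u, v) positive definite. Then the isotropy group {g ∈ GL(V) : ρ_g Ω = Ω, ρ_g ω = ω} is isomorphic to SU(n), and in particular is a subgroup of the orthogonal group O(V, g). -/
/-
STATEMENT 6 (Lemma 3-2-2 / Theorem 3-2-3): Let V be a 2n-dimensional real
vector space with a Kähler-Einstein structure (Ω, ω): Ω a Calabi-Yau structure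
(nonzero, of type (n,0) for the induced complex structure I = I_Ω), ω a
symplectic real 2-form of type (1,1), and g(u,v) = ω(I u, v) positive
definite.  Then the isotropy group {g ∈ GL(V) : ρ_g Ω = Ω, ρ_g ω = ω} is
isomorphic to SU(n), and in particular every element preserves the metric g
(it lies in O(V, g)).
-/

variable {n : ℕ} {V : Type*} [AddCommGroup V] [Module ℝ V]

/-- The isotropy group of the pair (Ω, ω) inside GL(V). -/
def pairStabilizer (Ω : AlternatingMap ℝ V ℂ (Fin n))
    (ω : AlternatingMap ℝ V ℝ (Fin 2)) : Subgroup (V ≃ₗ[ℝ] V) where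
  carrier := {g | (∀ x : Fin n → V, Ω (fun i => g (x i)) = Ω x) ∧
                  (∀ y : Fin 2 → V, ω (fun i => g (y i)) = ω y)}
  one_mem' := ⟨fun _ => rfl, fun _ => rfl⟩
  mul_mem' := by
    rintro a b ⟨ha1, ha2⟩ ⟨hb1, hb2⟩
    exact ⟨fun x => (ha1 fun i => b (x i)).trans (hb1 x),
           fun y => (ha2 fun i => b (y i)).trans (hb2 y)⟩
  inv_mem' := by
    rintro a ⟨ha1, ha2⟩
    constructor
    · intro x
      have h := ha1 fun i => a.symm (x i)
      simp only [LinearEquiv.apply_symm_apply] at h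
      exact h.symm
    · intro y
      have h := ha2 fun i => a.symm (y i)
      simp only [LinearEquiv.apply_symm_apply] at h
      exact h.symm

theorem stmt_6 [FiniteDimensional ℝ V]
    (hn : 0 < n)
    (hdim : Module.finrank ℝ V = 2 * n)
    (Ω : AlternatingMap ℝ V ℂ (Fin n)) (hΩ : Ω ≠ 0)
    (ω : AlternatingMap ℝ V ℝ (Fin 2))
    (I : V →ₗ[ℝ] V) (hI : ∀ v : V, I (I v) = -v)
    -- Ω is of type (n,0) with respect to I = I_Ω:
    (htype : ∀ (x : Fin n → V) (j : Fin n),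
      Ω (Function.update x j (I (x j))) = Complex.I * Ω x)
    -- ω is of type (1,1):
    (hω11 : ∀ u v : V, ω ![I u, I v] = ω ![u, v])
    -- nondegeneracy of ω:
    (hnondeg : ∀ u : V, (∀ v : V, ω ![u, v] = 0) → u = 0)
    -- g(u,v) = ω(I u, v) is positive definite:
    (hpos : ∀ v : V, v ≠ 0 → 0 < ω ![I v, v]) :
    Nonempty (pairStabilizer Ω ω ≃* Matrix.specialUnitaryGroup (Fin n) ℂ) ∧
    (∀ f ∈ pairStabilizer Ω ω, ∀ u v : V,
      ω ![I (f u), f v] = ω ![I u, v]) := by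
  classical
  haveI : NeZero n := ⟨hn.ne'⟩
  -- the complex module structure induced by I
  letI modC : Module ℂ V :=
    { smul := fun c v => c.re • v + c.im • I v
      one_smul := fun v => by
        show (1:ℂ).re • v + (1:ℂ).im • I v = v
        simp
      mul_smul := fun a b v => by
        show (a*b).re • v + (a*b).im • I v
            = a.re • (b.re • v + b.im • I v) + a.im • I (b.re • v + b.im • I v)
        rw [map_add, map_smul, map_smul, hI, Complex.mul_re, Complex.mul_im]
        module
      smul_zero := fun a => by
        show a.re • (0:V) + a.im • I 0 = 0
        simp
      smul_add := fun a u v => by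
        show a.re • (u + v) + a.im • I (u + v)
            = (a.re • u + a.im • I u) + (a.re • v + a.im • I v)
        rw [map_add]
        module
      add_smul := fun a b v => by
        show (a+b).re • v + (a+b).im • I v
            = (a.re • v + a.im • I v) + (b.re • v + b.im • I v)
        rw [Complex.add_re, Complex.add_im]
        module
      zero_smul := fun v => by
        show (0:ℂ).re • v + (0:ℂ).im • I v = 0
        simp }
  have hsmul : ∀ (c : ℂ) (v : V), c • v = c.re • v + c.im • I v := fun _ _ => rfl
  haveI : IsScalarTower ℝ ℂ V :=
    ⟨fun r c v => by
      rw [hsmul, hsmul, Complex.smul_re, Complex.smul_im]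
      simp only [smul_eq_mul, smul_add, smul_smul]⟩
  haveI : FiniteDimensional ℂ V := FiniteDimensional.right ℝ ℂ V
  have hrank : Module.finrank ℂ V = n := by
    have h2 := Module.finrank_mul_finrank ℝ ℂ V
    rw [Complex.finrank_real_complex, hdim] at h2
    omega
  -- the complex-multilinear upgrade of Ω
  have hIslot : ∀ (x : Fin n → V) (i : Fin n) (v : V),
      Ω (Function.update x i (I v)) = Complex.I * Ω (Function.update x i v) := by
    intro x i v
    have h := htype (Function.update x i v) i
    rwa [Function.update_self, Function.update_idem] at h
  let ΩC : AlternatingMap ℂ V ℂ (Fin n) :=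
    { toFun := Ω
      map_update_add' := by
        intro dec x i a b
        exact Ω.map_update_add x i a b
      map_update_smul' := by
        intro dec x i c v
        have hd : dec = instDecidableEqFin n := Subsingleton.elim _ _
        subst hd
        rw [hsmul, Ω.map_update_add, Ω.map_update_smul, Ω.map_update_smul, hIslot,
          smul_eq_mul, Complex.real_smul, Complex.real_smul]
        apply Complex.ext <;> simp [Complex.mul_re, Complex.mul_im] <;> ring
      map_eq_zero_of_eq' := fun v i j h hij => Ω.map_eq_zero_of_eq v h hij }
  have hΩCapp : ∀ x, ΩC x = Ω x := fun _ => rfl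
  have hΩC : ΩC ≠ 0 := by
    intro h
    apply hΩ
    ext x
    have := congrArg (fun F : AlternatingMap ℂ V ℂ (Fin n) => F x) h
    simpa [hΩCapp] using this
  -- the inner product
  have hupd0 : ∀ (a b x : V), Function.update ![a, b] 0 x = ![x, b] := by
    intro a b x; funext i; fin_cases i <;> simp
  have hupd1 : ∀ (a b x : V), Function.update ![a, b] 1 x = ![a, x] := by
    intro a b x; funext i; fin_cases i <;> simp
  have hω_add0 : ∀ a a' b : V, ω ![a + a', b] = ω ![a, b] + ω ![a', b] := by
    intro a a' b
    have h := ω.map_update_add ![a, b] 0 a a'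
    rwa [hupd0, hupd0, hupd0] at h
  have hω_smul0 : ∀ (r : ℝ) (a b : V), ω ![r • a, b] = r * ω ![a, b] := by
    intro r a b
    have h := ω.map_update_smul ![a, b] 0 r a
    rwa [hupd0, hupd0] at h
  have hanti : ∀ a b : V, ω ![a, b] = - ω ![b, a] := by
    intro a b
    have h := ω.map_swap ![b, a] (show (0 : Fin 2) ≠ 1 by decide)
    have he : (![b, a] ∘ Equiv.swap (0:Fin 2) 1) = ![a, b] := by
      funext i; fin_cases i <;> simp [Equiv.swap_apply_left, Equiv.swap_apply_right]
    rwa [he] at h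
  have hωneg0 : ∀ a b : V, ω ![-a, b] = - ω ![a, b] := by
    intro a b
    have := hω_smul0 (-1) a b
    simpa using this
  have hgsymm : ∀ u v : V, ω ![I u, v] = ω ![I v, u] := by
    intro u v
    calc ω ![I u, v] = ω ![I (I u), I v] := (hω11 (I u) v).symm
      _ = ω ![-u, I v] := by rw [hI]
      _ = - ω ![u, I v] := hωneg0 u (I v)
      _ = ω ![I v, u] := by rw [hanti u (I v)]; ring
  have hωzero : ω ![I (0:V), 0] = 0 := by
    have : (![I (0:V), 0]) 1 = 0 := by simp
    exact ω.map_coord_zero 1 this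
  letI core : InnerProductSpace.Core ℂ V :=
    { inner := fun u v => ⟨ω ![I u, v], -(ω ![u, v])⟩
      conj_inner_symm := by
        intro x y
        apply Complex.ext
        · show (⟨ω ![I y, x], -(ω ![y, x])⟩ : ℂ).re = ω ![I x, y]
          show ω ![I y, x] = ω ![I x, y]
          exact (hgsymm x y).symm
        · show -(-(ω ![y, x])) = -(ω ![x, y])
          rw [hanti x y]
      re_inner_nonneg := by
        intro x
        show (0:ℝ) ≤ ω ![I x, x]
        by_cases hx : x = 0
        · subst hx; rw [hωzero]
        · exact (hpos x hx).le
      add_left := by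
        intro x y z
        apply Complex.ext
        · show ω ![I (x + y), z] = ω ![I x, z] + ω ![I y, z]
          rw [map_add, hω_add0]
        · show -(ω ![x + y, z]) = -(ω ![x, z]) + -(ω ![y, z])
          rw [hω_add0]; ring
      smul_left := by
        intro x y r
        have hIr : I (r • x) = r.re • I x + r.im • (-x) := by
          rw [hsmul, map_add, map_smul, map_smul, hI]
        apply Complex.ext
        · show ω ![I (r • x), y]
            = ((starRingEnd ℂ) r * (⟨ω ![I x, y], -(ω ![x, y])⟩ : ℂ)).re
          rw [hIr, hω_add0, hω_smul0, smul_neg, ← neg_smul, hω_smul0,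
            Complex.mul_re, Complex.conj_re, Complex.conj_im]
          show r.re * ω ![I x, y] + -r.im * ω ![x, y]
            = r.re * ω ![I x, y] - -r.im * -(ω ![x, y])
          ring
        · show -(ω ![r • x, y])
            = ((starRingEnd ℂ) r * (⟨ω ![I x, y], -(ω ![x, y])⟩ : ℂ)).im
          rw [hsmul, hω_add0, hω_smul0, hω_smul0,
            Complex.mul_im, Complex.conj_re, Complex.conj_im]
          show -(r.re * ω ![x, y] + r.im * ω ![I x, y])
            = r.re * -(ω ![x, y]) + -r.im * ω ![I x, y]
          ring
      definite := by
        intro x hx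
        by_contra hx0
        have h := hpos x hx0
        have h2 : ω ![I x, x] = 0 := congrArg Complex.re hx
        rw [h2] at h
        exact lt_irrefl 0 h }
  letI : NormedAddCommGroup V := core.toNormedAddCommGroup
  letI : InnerProductSpace ℂ V := InnerProductSpace.ofCore core.toCore
  have hinner : ∀ u v : V, (inner ℂ u v : ℂ) = ⟨ω ![I u, v], -(ω ![u, v])⟩ :=
    fun _ _ => rfl
  -- orthonormal basis
  let b : OrthonormalBasis (Fin n) ℂ V :=
    (stdOrthonormalBasis ℂ V).reindex (finCongr hrank)
  let bB : Module.Basis (Fin n) ℂ V := b.toBasis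
  -- representation of ΩC as a multiple of the determinant
  have hcΩ : ΩC bB ≠ 0 := (ΩC.map_basis_ne_zero_iff bB).2 hΩC
  have hrep : ∀ x : Fin n → V, ΩC x = ΩC bB * bB.det x := by
    intro x
    conv_lhs => rw [ΩC.eq_smul_basis_det bB]
    simp
  -- nondegeneracy of ΩC in the first slot
  have nondeg : ∀ v : V, (∀ y : Fin n → V, ΩC (Function.update y 0 v) = 0) → v = 0 := by
    intro v hv
    have hdet : ∀ y : Fin n → V, bB.det (Function.update y 0 v) = 0 := by
      intro y
      have h := hv y
      rw [hrep] at h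
      exact (mul_eq_zero.1 h).resolve_left hcΩ
    have hcoord : ∀ k, bB.repr v k = 0 := by
      intro k
      set σ := Equiv.swap (0 : Fin n) k with hσ
      set y : Fin n → V := bB ∘ σ with hy
      have hexp : bB.det (Function.update y 0 v)
          = ∑ i, bB.repr v i • bB.det (Function.update y 0 (bB i)) := by
        conv_lhs => rw [← bB.sum_repr v]
        rw [(bB.det : AlternatingMap ℂ V ℂ (Fin n)).map_update_sum Finset.univ 0
          (fun i => bB.repr v i • bB i) y]
        congr 1
        funext i
        rw [AlternatingMap.map_update_smul]
      have hzero : ∀ i, i ≠ k → bB.det (Function.update y 0 (bB i)) = 0 := by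
        intro i hik
        by_cases hi0 : i = 0
        · subst hi0
          have hk0 : (0 : Fin n) ≠ k := fun h => hik h
          refine bB.det.map_eq_zero_of_eq _
            (show Function.update y 0 (bB 0) 0 = Function.update y 0 (bB 0) k from ?_) hk0
          rw [Function.update_self, Function.update_of_ne hk0.symm]
          show bB 0 = bB (σ k)
          rw [hσ, Equiv.swap_apply_right]
        · refine bB.det.map_eq_zero_of_eq _
            (show Function.update y 0 (bB i) i = Function.update y 0 (bB i) 0 from ?_) hi0
          rw [Function.update_self, Function.update_of_ne hi0]
          show bB (σ i) = bB i
          rw [hσ, Equiv.swap_apply_of_ne_of_ne hi0 hik]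
      have hyk : y 0 = bB k := by
        show bB (σ 0) = bB k
        rw [hσ, Equiv.swap_apply_left]
      have hdy : bB.det y = ((Equiv.Perm.sign σ : ℤ) : ℂ) := by
        rw [hy, bB.det.map_perm bB σ, Module.Basis.det_self]
        simp [Units.smul_def, zsmul_eq_mul]
      have hdy0 : bB.det y ≠ 0 := by
        rw [hdy]
        exact_mod_cast (Equiv.Perm.sign σ).ne_zero
      have hsum : bB.det (Function.update y 0 v) = bB.repr v k • bB.det y := by
        rw [hexp]
        rw [Finset.sum_eq_single k]
        · rw [← hyk, Function.update_eq_self]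
        · intro i _ hik
          rw [hzero i hik, smul_zero]
        · intro hk
          exact absurd (Finset.mem_univ k) hk
      rw [hdet y, smul_eq_mul] at hsum
      exact (mul_eq_zero.1 hsum.symm).resolve_right hdy0
    exact (LinearEquiv.map_eq_zero_iff bB.repr).1 (by ext k; exact hcoord k)
  -- elements of the stabilizer commute with I
  have hcomm : ∀ f : V ≃ₗ[ℝ] V, f ∈ pairStabilizer Ω ω → ∀ v : V, I (f v) = f (I v) := by
    intro f hf v
    obtain ⟨hf1, hf2⟩ := hf
    have key : ∀ y : Fin n → V, ΩC (Function.update y 0 (I (f v) - f (I v))) = 0 := by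
      intro y
      set x : Fin n → V := Function.update (fun i => f.symm (y i)) 0 v with hx
      have hx0 : x 0 = v := by rw [hx]; simp
      have hfx : (fun i => f (x i)) = Function.update y 0 (f v) := by
        funext i
        by_cases hi : i = 0
        · subst hi; rw [hx0, Function.update_self]
        · rw [Function.update_of_ne hi, hx, Function.update_of_ne hi,
            LinearEquiv.apply_symm_apply]
      have hA : Ω (Function.update y 0 (I (f v))) = Complex.I * Ω (fun i => f (x i)) := by
        have h5 : Function.update y 0 (I (f v))
            = Function.update (fun i => f (x i)) 0 (I (f v)) := by
          rw [hfx, Function.update_idem]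
        rw [h5, hIslot (fun i => f (x i)) 0 (f v)]
        congr 1
        rw [hfx, Function.update_idem, ← hfx]
      have hB : Ω (Function.update y 0 (f (I v))) = Complex.I * Ω (fun i => f (x i)) := by
        have h1 : (fun i => f (Function.update x 0 (I v) i)) =
            Function.update y 0 (f (I v)) := by
          funext i
          by_cases hi : i = 0
          · subst hi; rw [Function.update_self, Function.update_self]
          · rw [Function.update_of_ne hi, Function.update_of_ne hi, hx,
              Function.update_of_ne hi, LinearEquiv.apply_symm_apply]
        have h2 := hf1 (Function.update x 0 (I v))
        rw [h1] at h2
        rw [h2, hIslot x 0 v]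
        have h4 : Function.update x 0 v = x := by
          rw [← hx0]; exact Function.update_eq_self 0 x
        rw [h4, ← hf1 x]
      have hsub := Ω.map_update_sub y 0 (I (f v)) (f (I v))
      rw [hΩCapp, hsub, hA, hB, sub_self]
    have := nondeg _ key
    exact sub_eq_zero.1 this
  -- the metric is preserved (second half of the statement)
  have hpair : ∀ (f : V ≃ₗ[ℝ] V) (u v : V), (fun i => f (![u, v] i)) = ![f u, f v] := by
    intro f u v
    funext i; fin_cases i <;> simp
  have hmetric : ∀ f ∈ pairStabilizer Ω ω, ∀ u v : V,
      ω ![I (f u), f v] = ω ![I u, v] := by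
    intro f hf u v
    rw [hcomm f hf u]
    have h := hf.2 ![I u, v]
    rwa [hpair f (I u) v] at h
  refine ⟨?_, hmetric⟩
  have heta : ∀ y : Fin 2 → V, y = ![y 0, y 1] := by
    intro y; funext i; fin_cases i <;> simp
  -- the complexification of a stabilizer element
  have hCsmul : ∀ (f : V ≃ₗ[ℝ] V), f ∈ pairStabilizer Ω ω →
      ∀ (c : ℂ) (v : V), f (c • v) = c • f v := by
    intro f hf c v
    rw [hsmul, hsmul, map_add, map_smul, map_smul, hcomm f hf]
  let toC : pairStabilizer Ω ω → (V →ₗ[ℂ] V) := fun f =>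
    { toFun := f.1
      map_add' := fun a b => map_add f.1 a b
      map_smul' := fun c v => hCsmul f.1 f.2 c v }
  -- ΩC transforms by the complex determinant
  have hdetC : ∀ (fC : V →ₗ[ℂ] V) (x : Fin n → V),
      ΩC (fun i => fC (x i)) = LinearMap.det fC * ΩC x := by
    intro fC x
    rw [hrep (fun i => fC (x i)), hrep x]
    have h := bB.det_comp fC x
    rw [show (fun i => fC (x i)) = fC ∘ x from rfl, h]
    ring
  have hdet1 : ∀ f : pairStabilizer Ω ω, LinearMap.det (toC f) = 1 := by
    intro f
    obtain ⟨hf1, hf2⟩ := f.2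
    have h1 : Ω (fun i => (toC f) (bB i)) = Ω (fun i => bB i) := hf1 (fun i => bB i)
    have h2 := hdetC (toC f) (fun i => bB i)
    rw [hΩCapp, hΩCapp] at h2
    rw [h1] at h2
    have h3 : ΩC (fun i => bB i) ≠ 0 := by
      rw [hΩCapp]
      exact fun h => hcΩ (by rw [← hΩCapp] at h; exact h)
    rw [hΩCapp] at h3
    nth_rewrite 1 [← one_mul (Ω fun i => bB i)] at h2
    exact (mul_right_cancel₀ h3 h2).symm
  -- inner products via coordinates
  have hrepr_eq : ∀ (x : V) (k : Fin n), bB.repr x k = b.repr x k := by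
    intro x k
    exact b.coe_toBasis_repr_apply x k
  have hinner_dot : ∀ u v : V, (inner ℂ u v : ℂ)
      = dotProduct (star (fun k => bB.repr u k)) (fun k => bB.repr v k) := by
    intro u v
    have h := b.repr.inner_map_map u v
    rw [← h, PiLp.inner_apply]
    simp only [RCLike.inner_apply, dotProduct, Pi.star_apply, hrepr_eq,
      RCLike.star_def]
    exact Finset.sum_congr rfl fun _ _ => mul_comm _ _
  have hBinner : ∀ i j, (inner ℂ (bB i) (bB j) : ℂ) = if i = j then 1 else 0 := by
    intro i j
    have h := (orthonormal_iff_ite.1 b.orthonormal) i j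
    simpa [bB, OrthonormalBasis.coe_toBasis] using h
  have hstab_inner : ∀ f : pairStabilizer Ω ω, ∀ u v : V,
      (inner ℂ (f.1 u) (f.1 v) : ℂ) = inner ℂ u v := by
    intro f u v
    obtain ⟨hf1, hf2⟩ := f.2
    rw [hinner, hinner]
    apply Complex.ext
    · exact hmetric f.1 ⟨hf1, hf2⟩ u v
    · show -(ω ![f.1 u, f.1 v]) = -(ω ![u, v])
      have h := hf2 ![u, v]
      rw [hpair] at h
      rw [h]
  have hrepr_mulVec : ∀ (fC : V →ₗ[ℂ] V) (x : V),
      (fun k => bB.repr (fC x) k)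
        = (LinearMap.toMatrix bB bB fC).mulVec (fun k => bB.repr x k) := by
    intro fC x
    exact (LinearMap.toMatrix_mulVec_repr bB bB fC x).symm
  have hAA : ∀ (A : Matrix (Fin n) (Fin n) ℂ) (u' v' : Fin n → ℂ),
      dotProduct (star (A.mulVec u')) (A.mulVec v')
        = dotProduct (star u') ((star A * A).mulVec v') := by
    intro A u' v'
    rw [Matrix.star_mulVec, Matrix.dotProduct_mulVec, Matrix.vecMul_vecMul,
      Matrix.dotProduct_mulVec, Matrix.star_eq_conjTranspose]
  -- membership of the image in SU(n)
  have hmemSU : ∀ f : pairStabilizer Ω ω,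
      LinearMap.toMatrix bB bB (toC f) ∈ Matrix.specialUnitaryGroup (Fin n) ℂ := by
    intro f
    set A := LinearMap.toMatrix bB bB (toC f) with hA
    rw [Matrix.mem_specialUnitaryGroup_iff]
    constructor
    · rw [Matrix.mem_unitaryGroup_iff']
      ext i j
      rw [Matrix.mul_apply, Matrix.one_apply]
      have hcalc : ∑ k, (star A) i k * A k j
          = dotProduct (star (fun k => bB.repr ((toC f) (bB i)) k))
              (fun k => bB.repr ((toC f) (bB j)) k) := by
        simp only [dotProduct, Pi.star_apply, Matrix.star_apply, hA,
          LinearMap.toMatrix_apply]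
      have h4 : (inner ℂ ((toC f) (bB i)) ((toC f) (bB j)) : ℂ) = inner ℂ (bB i) (bB j) :=
        hstab_inner f (bB i) (bB j)
      rw [hcalc, ← hinner_dot, h4, hBinner i j]
    · rw [LinearMap.det_toMatrix]
      exact hdet1 f
  -- the monoid homomorphism into SU(n)
  let Φ : pairStabilizer Ω ω →* Matrix.specialUnitaryGroup (Fin n) ℂ :=
    { toFun := fun f => ⟨LinearMap.toMatrix bB bB (toC f), hmemSU f⟩
      map_one' := by
        apply Subtype.ext
        show LinearMap.toMatrix bB bB (toC 1) = 1
        have h : toC 1 = LinearMap.id := by ext v; rfl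
        rw [h, LinearMap.toMatrix_id]
      map_mul' := by
        intro f g
        apply Subtype.ext
        show LinearMap.toMatrix bB bB (toC (f * g))
          = LinearMap.toMatrix bB bB (toC f) * LinearMap.toMatrix bB bB (toC g)
        have h : toC (f * g) = (toC f).comp (toC g) := by ext v; rfl
        rw [h, LinearMap.toMatrix_comp bB bB bB] }
  have hinj : Function.Injective Φ := by
    intro f g h
    have h1 : toC f = toC g :=
      (LinearMap.toMatrix bB bB).injective (congrArg Subtype.val h)
    apply Subtype.ext
    apply LinearEquiv.ext
    intro v
    exact DFunLike.congr_fun h1 v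
  have hsurj : Function.Surjective Φ := by
    rintro ⟨A, hA⟩
    rw [Matrix.mem_specialUnitaryGroup_iff] at hA
    obtain ⟨hAu, hAdet⟩ := hA
    rw [Matrix.mem_unitaryGroup_iff'] at hAu
    have hAunit : IsUnit A.det := by rw [hAdet]; exact isUnit_one
    let e : V ≃ₗ[ℂ] V := A.toLinearEquiv bB hAunit
    let fC : V →ₗ[ℂ] V := Matrix.toLin bB bB A
    have he : ∀ v, e v = fC v := fun _ => rfl
    have hMat : LinearMap.toMatrix bB bB fC = A := LinearMap.toMatrix_toLin bB bB A
    have hip : ∀ u v : V, (inner ℂ (fC u) (fC v) : ℂ) = inner ℂ u v := by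
      intro u v
      rw [hinner_dot, hinner_dot u v, hrepr_mulVec fC u, hrepr_mulVec fC v, hMat,
        hAA, hAu, Matrix.one_mulVec]
    let f : V ≃ₗ[ℝ] V := e.restrictScalars ℝ
    have hfe : ∀ v, f v = fC v := fun _ => rfl
    have hmem : f ∈ pairStabilizer Ω ω := by
      constructor
      · intro x
        have h1 : (fun i => f (x i)) = (fun i => fC (x i)) := rfl
        have h2 := hdetC fC x
        rw [hΩCapp, hΩCapp] at h2
        rw [h1, h2]
        have h3 : LinearMap.det fC = 1 := by
          rw [← LinearMap.det_toMatrix bB fC, hMat, hAdet]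
        rw [h3, one_mul]
      · intro y
        have hwv : ∀ u v : V, ω ![fC u, fC v] = ω ![u, v] := by
          intro u v
          have h1 := congrArg Complex.im (hip u v)
          rw [hinner, hinner] at h1
          have h2 : -(ω ![fC u, fC v]) = -(ω ![u, v]) := h1
          linarith
        calc ω (fun i => f (y i)) = ω ![f (y 0), f (y 1)] := by
              congr 1
              funext i; fin_cases i <;> rfl
          _ = ω ![y 0, y 1] := hwv (y 0) (y 1)
          _ = ω y := by rw [← heta y]
    refine ⟨⟨f, hmem⟩, ?_⟩
    apply Subtype.ext
    show LinearMap.toMatrix bB bB (toC ⟨f, hmem⟩) = A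
    have h : toC ⟨f, hmem⟩ = fC := by ext v; rfl
    rw [h, hMat]
  exact ⟨MulEquiv.ofBijective Φ ⟨hinj, hsurj⟩⟩
end

section
/- On a compact Kähler manifold X of complex dimension n with Kähler form ω and holomorphic volume form Ω, consider the complex #: Γ(Λ^{n-1,0}) →d Γ(Λ^{n,0} ⊕ Λ^{n-1,1}) →d Γ(Λ^{n,1} ⊕ Λ^{n-1,2}), where d is the exterior derivative restricted to these subbundles. If a = (x, y) with x ∈ Γ(Λ^{n,0}), y ∈ Γ(Λ^{n-1,1}) is d-closed and a = db for some b = (z, w) ∈ Γ(Λ^{n-1,0}) ⊕ Γ(Λ^{n-2,1}), then a = d(z − ∂γ) for some γ ∈ Γ(Λ^{n-2,0}); hence the natural map H¹(#) → H^n_{dR}(X, ℂ) is injective. -/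
/-
STATEMENT 7 (Proposition 3-1-4): On a compact Kähler manifold X of complex
dimension n with holomorphic volume form Ω, consider the complex
# : Γ(Λ^{n-1,0}) →d Γ(Λ^{n,0} ⊕ Λ^{n-1,1}) →d Γ(Λ^{n,1} ⊕ Λ^{n-1,2}).
If a = (x,y) is d-closed and a = db for b = (z,w) ∈ Γ(Λ^{n-1,0}) ⊕ Γ(Λ^{n-2,1})
(so x = ∂z, y = ∂̄z + ∂w, ∂̄w = 0 componentwise), then a = d(z − ∂γ) for some
γ ∈ Γ(Λ^{n-2,0}); hence H¹(#) → H^n_dR(X, ℂ) is injective.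
We model the bigraded pieces of the Dolbeault double complex by the modules
  Anm20 = Γ(Λ^{n-2,0}), Anm10 = Γ(Λ^{n-1,0}), An0 = Γ(Λ^{n,0}),
  Anm21 = Γ(Λ^{n-2,1}), Anm11 = Γ(Λ^{n-1,1}), An1 = Γ(Λ^{n,1}),
  Anm22 = Γ(Λ^{n-2,2}), Anm12 = Γ(Λ^{n-1,2}),
with ∂ (maps `p…`) raising the first index and ∂̄ (maps `q…`) raising the
second, ∂² = 0, ∂∂̄ = −∂̄∂, and the ∂∂̄-lemma `hddbar` (valid on compact Kähler
manifolds) at bidegree (n-1,1).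
-/
theorem stmt_7
    {Anm20 Anm10 An0 Anm21 Anm11 An1 Anm22 Anm12 : Type*}
    [AddCommGroup Anm20] [Module ℂ Anm20] [AddCommGroup Anm10] [Module ℂ Anm10]
    [AddCommGroup An0] [Module ℂ An0] [AddCommGroup Anm21] [Module ℂ Anm21]
    [AddCommGroup Anm11] [Module ℂ Anm11] [AddCommGroup An1] [Module ℂ An1]
    [AddCommGroup Anm22] [Module ℂ Anm22] [AddCommGroup Anm12] [Module ℂ Anm12]
    -- ∂ :
    (pA : Anm20 →ₗ[ℂ] Anm10) (pB : Anm10 →ₗ[ℂ] An0)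
    (pA' : Anm21 →ₗ[ℂ] Anm11) (pB' : Anm11 →ₗ[ℂ] An1)
    (pA'' : Anm22 →ₗ[ℂ] Anm12)
    -- ∂̄ :
    (qA : Anm20 →ₗ[ℂ] Anm21) (qB : Anm10 →ₗ[ℂ] Anm11) (qC : An0 →ₗ[ℂ] An1)
    (qA' : Anm21 →ₗ[ℂ] Anm22) (qB' : Anm11 →ₗ[ℂ] Anm12)
    (hpp : ∀ a : Anm20, pB (pA a) = 0)                        -- ∂∂ = 0
    (hanti : ∀ a : Anm20, pA' (qA a) = - qB (pA a))           -- ∂∂̄ = −∂̄∂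
    (hanti' : ∀ w : Anm21, qB' (pA' w) = - pA'' (qA' w))      -- ∂̄∂ = −∂∂̄
    -- the ∂∂̄-lemma at bidegree (n-1,1): a ∂̄-closed ∂-exact form is ∂∂̄-exact
    (hddbar : ∀ η : Anm11, qB' η = 0 → (∃ w : Anm21, η = pA' w) →
        ∃ γ : Anm20, η = pA' (qA γ))
    -- a = (x, y) is a closed element of Γ(Λ^{n,0} ⊕ Λ^{n-1,1}):
    (x : An0) (y : Anm11)
    (hclosed1 : qC x + pB' y = 0) (hclosed2 : qB' y = 0)
    -- a = db with b = (z, w):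
    (z : Anm10) (w : Anm21)
    (hx : x = pB z) (hy : y = qB z + pA' w) (hw : qA' w = 0) :
    ∃ γ : Anm20, x = pB (z - pA γ) ∧ y = qB (z - pA γ) := by

  obtain ⟨γ, hγ⟩ := hddbar (pA' w) (by rw [hanti' w, hw, map_zero, neg_zero]) ⟨w, rfl⟩
  refine ⟨γ, ?_, ?_⟩
  · simp [hx, map_sub, hpp]
  · rw [hy, hγ, hanti, map_sub]; abel
end
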